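/- arXiv:1501.03489 — 6 statements merged into one kernel-verified Lean document; each statement's English description precedes it below -/
import Mathlib

section
/- For polytopes P, Q, R in a real vector space V, if P + Q = P + R (Minkowski sums), then Q = R. -/
/-! Rådström cancellation: if `A + B ⊆ C + B` with `B` nonempty and bounded and `C` closed and
convex, then for `a ∈ A` and `b₀ ∈ B` convexity of `C` gives `(n + 1) • a + b₀ ∈ (n + 1) • C + B`
for every `n`, so `a` lies within `diam B / (n + 1)` of `C`, hence in `C`. Polytopes are compact
and convex, so this cancels `P`; the topology comes from a linear map to `ℝⁿ` that is injective on
the span of the vertices of `P`, `Q` and `R`. -/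

open Pointwise Set

theorem Convex.natCast_succ_smul_vadd_subset {𝕜 E : Type*} [Field 𝕜] [LinearOrder 𝕜]
    [IsStrictOrderedRing 𝕜] [AddCommGroup E] [Module 𝕜 E] {A B C : Set E} (hC : Convex 𝕜 C)
    (h : A + B ⊆ C + B) {a : E} (ha : a ∈ A) (n : ℕ) :
    ((n : 𝕜) + 1) • a +ᵥ B ⊆ ((n : 𝕜) + 1) • C + B := by
  have hstep : a +ᵥ B ⊆ C + B := (vadd_set_subset_add ha).trans h
  induction n with
  | zero => simpa using hstep
  | succ n ih =>
    push_cast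
    calc ((n : 𝕜) + 1 + 1) • a +ᵥ B = a +ᵥ (((n : 𝕜) + 1) • a +ᵥ B) := by
          rw [vadd_vadd, add_smul _ 1 a, one_smul, add_comm]
      _ ⊆ a +ᵥ (((n : 𝕜) + 1) • C + B) := vadd_set_mono ih
      _ = ((n : 𝕜) + 1) • C + (a +ᵥ B) := (add_vadd_comm _ _ _).symm
      _ ⊆ ((n : 𝕜) + 1) • C + (C + B) := add_subset_add_left hstep
      _ = ((n : 𝕜) + 1 + 1) • C + B := by
          rw [hC.add_smul (p := (n : 𝕜) + 1) (by positivity) zero_le_one, one_smul, add_assoc]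

theorem mem_closure_of_forall_natCast_succ_smul_sub_mem {F : Type*} [NormedAddCommGroup F]
    [NormedSpace ℝ F] {C D : Set F} (hD : Bornology.IsBounded D) {a : F}
    (h : ∀ n : ℕ, ∃ c ∈ C, ((n : ℝ) + 1) • (a - c) ∈ D) : a ∈ closure C := by
  obtain ⟨M, hM⟩ := hD.exists_norm_le
  refine Metric.mem_closure_iff.2 fun ε hε => ?_
  obtain ⟨n, hn⟩ := exists_nat_gt (M / ε)
  obtain ⟨c, hc, hac⟩ := h n
  have hn₁ : (0 : ℝ) < n + 1 := by positivity
  refine ⟨c, hc, ?_⟩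
  calc dist a c = ‖((n : ℝ) + 1) • (a - c)‖ / ((n : ℝ) + 1) := by
        rw [dist_eq_norm, norm_smul, Real.norm_of_nonneg hn₁.le, mul_div_cancel_left₀ _ hn₁.ne']
    _ ≤ M / ((n : ℝ) + 1) := by gcongr; exact hM _ hac
    _ < ε := by
        rw [div_lt_iff₀ hn₁]
        rw [div_lt_iff₀ hε] at hn
        linarith

section

variable {F : Type*} [NormedAddCommGroup F] [NormedSpace ℝ F]

theorem Convex.subset_of_add_subset_add {A B C : Set F} (hC : Convex ℝ C) (hCc : IsClosed C)
    (hB : B.Nonempty) (hBb : Bornology.IsBounded B) (h : A + B ⊆ C + B) : A ⊆ C := by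
  obtain ⟨b₀, hb₀⟩ := hB
  intro a ha
  rw [← hCc.closure_eq]
  refine mem_closure_of_forall_natCast_succ_smul_sub_mem (isBounded_sub hBb hBb) fun n => ?_
  obtain ⟨_, ⟨c, hc, rfl⟩, b, hb, hcb⟩ :=
    hC.natCast_succ_smul_vadd_subset h ha n (vadd_mem_vadd_set hb₀)
  simp only [vadd_eq_add] at hcb
  exact ⟨c, hc, b, hb, b₀, hb₀, by linear_combination (norm := module) hcb⟩

theorem Convex.eq_of_add_eq_add_left {A B C : Set F} (hA : Convex ℝ A) (hAc : IsClosed A)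
    (hC : Convex ℝ C) (hCc : IsClosed C) (hB : B.Nonempty) (hBb : Bornology.IsBounded B)
    (h : B + A = B + C) : A = C := by
  rw [add_comm B, add_comm B] at h
  exact (hC.subset_of_add_subset_add hCc hB hBb h.le).antisymm
    (hA.subset_of_add_subset_add hAc hB hBb h.ge)

end

theorem Submodule.exists_linearMap_injOn {K V : Type*} [DivisionRing K] [AddCommGroup V]
    [Module K V] (W : Submodule K V) [FiniteDimensional K W] :
    ∃ f : V →ₗ[K] (Fin (Module.finrank K W) → K), Set.InjOn f W := by
  obtain ⟨g, hg⟩ := W.subtype.exists_leftInverse_of_injective W.ker_subtype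
  refine ⟨(Module.finBasis K W).equivFun.toLinearMap ∘ₗ g, fun x hx y hy hxy => ?_⟩
  have hg' : ∀ z : W, g z = z := LinearMap.congr_fun hg
  have hgxy : g x = g y := (Module.finBasis K W).equivFun.injective hxy
  simpa using congrArg W.subtype ((hg' ⟨x, hx⟩).symm.trans (hgxy.trans (hg' ⟨y, hy⟩)))

/-- Cancellation of Minkowski sums of polytopes: if `P + Q = P + R` then `Q = R`. -/
theorem minkowski_cancel {V : Type*} [AddCommGroup V] [Module ℝ V] (P Q R : Set V)
    (hP : ∃ S : Finset V, S.Nonempty ∧ P = convexHull ℝ (S : Set V))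
    (hQ : ∃ S : Finset V, S.Nonempty ∧ Q = convexHull ℝ (S : Set V))
    (hR : ∃ S : Finset V, S.Nonempty ∧ R = convexHull ℝ (S : Set V))
    (h : P + Q = P + R) : Q = R := by
  classical
  obtain ⟨S, hS, rfl⟩ := hP
  obtain ⟨T, -, rfl⟩ := hQ
  obtain ⟨U, -, rfl⟩ := hR
  set W := Submodule.span ℝ ((S ∪ T ∪ U : Finset V) : Set V)
  obtain ⟨f, hf⟩ := W.exists_linearMap_injOn
  have hW : ∀ X ⊆ S ∪ T ∪ U, convexHull ℝ (X : Set V) ⊆ W := fun X hX =>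
    convexHull_min ((Finset.coe_subset.2 hX).trans Submodule.subset_span) W.convex
  have hcompact : ∀ X : Finset V, IsCompact (f '' convexHull ℝ (X : Set V)) := fun X => by
    rw [f.image_convexHull]; exact (X.finite_toSet.image f).isCompact_convexHull ℝ
  refine (hf.image_eq_image_iff (hW T (Finset.subset_union_right.trans Finset.subset_union_left))
    (hW U Finset.subset_union_right)).1 ?_
  refine ((convex_convexHull ℝ _).linear_image f).eq_of_add_eq_add_left (hcompact T).isClosed
    ((convex_convexHull ℝ _).linear_image f) (hcompact U).isClosed
    (((Finset.coe_nonempty.2 hS).convexHull (𝕜 := ℝ)).image f) (hcompact S).isBounded ?_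
  rw [← Set.image_add, h, Set.image_add]
end

section
/- If u is a vertex (extreme point) of the Minkowski sum P + Q of two polytopes P and Q in a real vector space, then there exist a unique vertex v of P and a unique vertex w of Q with u = v + w. -/
/-!
Write `u = p + q` with `p ∈ P`, `q ∈ Q`. Moving `p` along a segment in `P` moves `u` along the
translated segment in `P + Q`, so `p` is extreme in `P`, and likewise `q` in `Q`. If also
`u = v + w` with `v ∈ P`, `w ∈ Q`, then `u` is the midpoint of `v + q` and `p + w`, both in `P + Q`,
so `v + q = u` and hence `v = p`, `w = q`.
-/

open Pointwise Set

section ExtremePointsAdd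

variable {𝕜 E : Type*} [Ring 𝕜] [AddCommGroup E] [Module 𝕜 E] {s t : Set E} {p q : E}

section PartialOrder

variable [PartialOrder 𝕜] [IsOrderedRing 𝕜]

theorem left_mem_extremePoints_of_add_mem_extremePoints (hp : p ∈ s) (hq : q ∈ t)
    (h : p + q ∈ (s + t).extremePoints 𝕜) : p ∈ s.extremePoints 𝕜 := by
  rw [mem_extremePoints_iff_left] at h ⊢
  refine ⟨hp, fun x₁ hx₁ x₂ hx₂ hp_mem => ?_⟩
  have hpq_mem : p + q ∈ openSegment 𝕜 (x₁ + q) (x₂ + q) := by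
    simpa only [add_comm _ q] using (mem_openSegment_translate 𝕜 q).2 hp_mem
  exact add_right_cancel (h.2 _ (add_mem_add hx₁ hq) _ (add_mem_add hx₂ hq) hpq_mem)

theorem right_mem_extremePoints_of_add_mem_extremePoints (hp : p ∈ s) (hq : q ∈ t)
    (h : p + q ∈ (s + t).extremePoints 𝕜) : q ∈ t.extremePoints 𝕜 := by
  rw [add_comm s, add_comm p] at h
  exact left_mem_extremePoints_of_add_mem_extremePoints hq hp h

end PartialOrder

theorem eq_of_add_eq_of_add_mem_extremePoints [LinearOrder 𝕜] [IsStrictOrderedRing 𝕜]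
    [Invertible (2 : 𝕜)] {v w : E} (hp : p ∈ s) (hq : q ∈ t) (hv : v ∈ s) (hw : w ∈ t)
    (h : p + q ∈ (s + t).extremePoints 𝕜) (hvw : v + w = p + q) : v = p := by
  have hmid : midpoint 𝕜 (v + q) (p + w) = p + q := by
    have hsum : (v + q) + (p + w) = (v + w) + (p + q) := by abel
    rw [hvw] at hsum
    rw [midpoint_eq_smul_add, hsum, ← midpoint_eq_smul_add, midpoint_self]
  have hpq_mem : p + q ∈ openSegment 𝕜 (v + q) (p + w) := hmid ▸ midpoint_mem_openSegment _ _
  rw [mem_extremePoints_iff_left] at h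
  exact add_right_cancel (h.2 _ (add_mem_add hv hq) _ (add_mem_add hp hw) hpq_mem)

end ExtremePointsAdd

theorem vertex_of_minkowski_sum_unique_general {V : Type*} [AddCommGroup V] [Module ℝ V]
    (P Q : Set V)
    (u : V) (hu : u ∈ Set.extremePoints ℝ (P + Q)) :
    ∃! vw : V × V, vw.1 ∈ Set.extremePoints ℝ P ∧ vw.2 ∈ Set.extremePoints ℝ Q ∧
      u = vw.1 + vw.2 := by
  obtain ⟨p, hp, q, hq, rfl⟩ := hu.1
  refine ⟨(p, q), ⟨left_mem_extremePoints_of_add_mem_extremePoints hp hq hu,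
    right_mem_extremePoints_of_add_mem_extremePoints hp hq hu, rfl⟩, ?_⟩
  rintro ⟨v, w⟩ ⟨hv, hw, hvw⟩
  obtain rfl : v = p := eq_of_add_eq_of_add_mem_extremePoints hp hq hv.1 hw.1 hu hvw.symm
  obtain rfl : w = q := (add_right_inj v).1 hvw.symm
  rfl

/-- Every vertex (extreme point) of the Minkowski sum `P + Q` of two polytopes decomposes
uniquely as the sum of a vertex of `P` and a vertex of `Q`. -/
theorem vertex_of_minkowski_sum_unique {V : Type*} [AddCommGroup V] [Module ℝ V]
    (P Q : Set V)
    (hP : ∃ S : Finset V, S.Nonempty ∧ P = convexHull ℝ (S : Set V))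
    (hQ : ∃ S : Finset V, S.Nonempty ∧ Q = convexHull ℝ (S : Set V))
    (u : V) (hu : u ∈ Set.extremePoints ℝ (P + Q)) :
    ∃! vw : V × V, vw.1 ∈ Set.extremePoints ℝ P ∧ vw.2 ∈ Set.extremePoints ℝ Q ∧
      u = vw.1 + vw.2 :=
  vertex_of_minkowski_sum_unique_general P Q u hu
end

section
/- For every vertex v of a polytope P in a real vector space, there exists a vertex w of a polytope Q such that v + w is a vertex of the Minkowski sum P + Q. -/
open Pointwise

/-!
Let `P = conv S` and `Q = conv T`. A continuous functional `l` separating the vertex `v` from the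
hull of `S \ {v}` attains its maximum over `P` only at `v`. The face of `P + Q` on which `l` is
maximal is then `v + F`, where `F` is the face of `Q` on which `l` is maximal. The compact face
`F` has an extreme point `w` (Krein–Milman), which is a vertex of `Q`, and `v + w` is an extreme
point of the face `v + F`, hence of `P + Q`.
-/

section Ordered

variable {𝕜 E : Type*} [Ring 𝕜] [PartialOrder 𝕜] [IsOrderedAddMonoid 𝕜] [AddCommGroup E]
  [Module 𝕜 E]

theorem add_mem_extremePoints_singleton_add {a x : E} {A : Set E} (hx : x ∈ A.extremePoints 𝕜) :
    a + x ∈ ({a} + A).extremePoints 𝕜 := by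
  rw [Set.singleton_add] at *
  refine ⟨Set.mem_image_of_mem _ hx.1, ?_⟩
  rintro _ ⟨y, hy, rfl⟩ _ ⟨z, hz, rfl⟩ hxyz
  have h := hx.2 hy hz ((mem_openSegment_translate 𝕜 a).1 hxyz)
  simp [h]

variable [TopologicalSpace 𝕜] [TopologicalSpace E]

theorem ContinuousLinearMap.toExposed_add (l : StrongDual 𝕜 E) (A B : Set E) :
    l.toExposed (A + B) = l.toExposed A + l.toExposed B := by
  ext x
  constructor
  · rintro ⟨⟨a, ha, b, hb, rfl⟩, hmax⟩
    refine ⟨a, ⟨ha, fun a' ha' => ?_⟩, b, ⟨hb, fun b' hb' => ?_⟩, rfl⟩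
    · simpa using hmax _ (Set.add_mem_add ha' hb)
    · simpa using hmax _ (Set.add_mem_add ha hb')
  · rintro ⟨a, ⟨ha, hamax⟩, b, ⟨hb, hbmax⟩, rfl⟩
    refine ⟨Set.add_mem_add ha hb, ?_⟩
    rintro _ ⟨a', ha', b', hb', rfl⟩
    simpa using add_le_add (hamax a' ha') (hbmax b' hb')

end Ordered

section LocallyConvex

variable {E : Type*} [AddCommGroup E] [Module ℝ E] [TopologicalSpace E] [T2Space E]
  [IsTopologicalAddGroup E] [ContinuousSMul ℝ E] [LocallyConvexSpace ℝ E]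

theorem Set.Finite.extremePoints_convexHull_subset_exposedPoints {S : Set E} (hS : S.Finite) :
    (convexHull ℝ S).extremePoints ℝ ⊆ (convexHull ℝ S).exposedPoints ℝ := by
  intro v hv
  have hvS : v ∈ S := extremePoints_convexHull_subset hv
  have hv_notMem : v ∉ convexHull ℝ (S \ {v}) := fun h =>
    (((convex_convexHull ℝ S).mem_extremePoints_iff_mem_sdiff_convexHull_sdiff.1 hv).2
      (convexHull_mono (Set.sdiff_subset_sdiff_left (subset_convexHull ℝ S)) h))
  obtain ⟨l, u, hlu, hu⟩ := geometric_hahn_banach_closed_point (convex_convexHull ℝ _)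
    (hS.sdiff.isCompact_convexHull (𝕜 := ℝ)).isClosed hv_notMem
  refine ⟨hv.1, l, fun y hy => ?_⟩
  rcases (S \ {v}).eq_empty_or_nonempty with h | h
  · have hyv : y = v := by
      simpa using convexHull_mono (Set.sdiff_eq_empty.1 h) hy
    simp [hyv]
  -- `y` lies on a segment from `v` to `conv (S \ {v})`, along which `l` is maximal only at `v`.
  rw [← Set.insert_eq_of_mem hvS, ← Set.insert_sdiff_singleton, convexHull_insert h,
    convexJoin_singleton_left, Set.mem_iUnion₂] at hy
  obtain ⟨z, hz, a, b, ha, hb, hab, rfl⟩ := hy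
  have hlz := hlu z hz
  rcases hb.eq_or_lt with rfl | hb
  · simp [show a = 1 by linarith]
  have hlt : l (a • v + b • z) < l v := calc
    l (a • v + b • z) = a * l v + b * l z := by simp
    _ < a * l v + b * l v := by gcongr; exact hlz.trans hu
    _ = l v := by rw [← add_mul, hab, one_mul]
  exact ⟨hlt.le, fun h => absurd h hlt.not_ge⟩

theorem exists_mem_extremePoints_add_mem_extremePoints {P Q : Set E} {v : E}
    (hv : v ∈ P.exposedPoints ℝ) (hQ : IsCompact Q) (hQne : Q.Nonempty) :
    ∃ w ∈ Q.extremePoints ℝ, v + w ∈ (P + Q).extremePoints ℝ := by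
  obtain ⟨hvP, l, hl⟩ := hv
  have hPv : l.toExposed P = {v} := by
    ext y
    exact ⟨fun hy => (hl y hy.1).2 (hy.2 v hvP), by
      rintro rfl
      exact ⟨hvP, fun y hy => (hl y hy).1⟩⟩
  obtain ⟨q, hqQ, hq⟩ := hQ.exists_isMaxOn hQne l.continuous.continuousOn
  have hFQ : IsExposed ℝ Q (l.toExposed Q) := ContinuousLinearMap.toExposed.isExposed
  obtain ⟨w, hw⟩ := (hFQ.isCompact hQ).extremePoints_nonempty ⟨q, hqQ, hq⟩
  refine ⟨w, hFQ.isExtreme.extremePoints_subset_extremePoints hw, ?_⟩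
  have hvw := add_mem_extremePoints_singleton_add (a := v) hw
  rw [← hPv, ← l.toExposed_add] at hvw
  exact ContinuousLinearMap.toExposed.isExposed.isExtreme.extremePoints_subset_extremePoints hvw

theorem exists_mem_extremePoints_convexHull_add_mem_extremePoints {S T : Set E} (hS : S.Finite)
    (hT : T.Finite) (hTne : T.Nonempty) {v : E} (hv : v ∈ (convexHull ℝ S).extremePoints ℝ) :
    ∃ w ∈ (convexHull ℝ T).extremePoints ℝ,
      v + w ∈ (convexHull ℝ S + convexHull ℝ T).extremePoints ℝ :=
  exists_mem_extremePoints_add_mem_extremePoints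
    (hS.extremePoints_convexHull_subset_exposedPoints hv)
    (hT.isCompact_convexHull (𝕜 := ℝ)) (convexHull_nonempty_iff.2 hTne)

end LocallyConvex

/-- For every vertex `v` of a polytope `P` there is a vertex `w` of a polytope `Q`
such that `v + w` is a vertex of the Minkowski sum `P + Q`. -/
theorem exists_vertex_add_vertex {V : Type*} [AddCommGroup V] [Module ℝ V]
    (P Q : Set V)
    (hP : ∃ S : Finset V, S.Nonempty ∧ P = convexHull ℝ (S : Set V))
    (hQ : ∃ S : Finset V, S.Nonempty ∧ Q = convexHull ℝ (S : Set V))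
    (v : V) (hv : v ∈ Set.extremePoints ℝ P) :
    ∃ w ∈ Set.extremePoints ℝ Q, v + w ∈ Set.extremePoints ℝ (P + Q) := by
  obtain ⟨S, -, rfl⟩ := hP
  obtain ⟨T, hT, rfl⟩ := hQ
  -- Equip `V` with the weak topology of its algebraic dual: it is Hausdorff and locally convex.
  have : T2Space (WeakBilin (Module.Dual.eval ℝ V)) :=
    (WeakBilin.isEmbedding (Module.eval_apply_injective ℝ)).t2Space
  exact exists_mem_extremePoints_convexHull_add_mem_extremePoints
    (E := WeakBilin (Module.Dual.eval ℝ V)) S.finite_toSet T.finite_toSet hT hv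
end

section
/- In the free group F on generators x₁, …, x_k, the fundamental formula of Fox calculus holds: for every f in the group ring ℤ[F], f − α(f)·e = Σᵢ (∂f/∂xᵢ)(xᵢ − 1), where α : ℤ[F] → ℤ is the augmentation map and e is the identity element. -/
open MonoidAlgebra

/-!
Both sides of the formula are linear in `f`, so it suffices to prove `g - 1 = Σᵢ (∂g/∂xᵢ)(xᵢ - 1)`
for group elements `g`. The product rule `∂(uv) = ∂u + u ∂v` mirrors the identity
`uv - 1 = (u - 1) + u (v - 1)`, so the elements satisfying the formula form a subgroup; it contains
the generators, hence is everything.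
-/

section FoxCalculus

variable {R G : Type*} [CommRing R] [Group G]

section Derivative

variable {D : R[G] →ₗ[R] R[G]}
  (hD : ∀ u v : G, D (of R G (u * v)) = D (of R G u) + of R G u * D (of R G v))
include hD

theorem foxDeriv_one : D 1 = 0 := by
  have h := hD 1 1
  rw [one_mul, map_one, one_mul] at h
  exact left_eq_add.mp h

theorem foxDeriv_of_inv (g : G) : D (of R G g⁻¹) = -(of R G g⁻¹ * D (of R G g)) := by
  have h := hD g⁻¹ g
  rw [inv_mul_cancel, map_one, foxDeriv_one hD] at h
  exact eq_neg_of_add_eq_zero_left h.symm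

end Derivative

variable {ι : Type*} [Fintype ι] (x : ι → G) (d : ι → R[G] →ₗ[R] R[G])
  (hd : ∀ (i : ι) (u v : G), d i (of R G (u * v)) = d i (of R G u) + of R G u * d i (of R G v))

def foxFormulaSubgroup : Subgroup G where
  carrier := {g | of R G g - 1 = ∑ i, d i (of R G g) * (of R G (x i) - 1)}
  one_mem' := by
    simp only [Set.mem_ofPred_eq, foxDeriv_one (hd _), zero_mul, Finset.sum_const_zero, map_one,
      sub_self]
  mul_mem' {u v} hu hv := by
    calc of R G (u * v) - 1 = (of R G u - 1) + of R G u * (of R G v - 1) := by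
          rw [map_mul, mul_sub, mul_one]; abel
      _ = _ := by
          rw [hu, hv, Finset.mul_sum, ← Finset.sum_add_distrib]
          refine Finset.sum_congr rfl fun i _ => ?_
          rw [hd i u v, add_mul, mul_assoc]
  inv_mem' {g} hg := by
    calc of R G g⁻¹ - 1 = -(of R G g⁻¹ * (of R G g - 1)) := by
          rw [mul_sub, mul_one, ← map_mul, inv_mul_cancel, map_one, neg_sub]
      _ = _ := by
          rw [hg, Finset.mul_sum, ← Finset.sum_neg_distrib]
          refine Finset.sum_congr rfl fun i _ => ?_
          rw [foxDeriv_of_inv (hd i), neg_mul, mul_assoc]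

variable [DecidableEq ι]
  (hgen : ∀ i j : ι, d i (of R G (x j)) = if j = i then 1 else 0)
include hd hgen

theorem closure_range_le_foxFormulaSubgroup :
    Subgroup.closure (Set.range x) ≤ foxFormulaSubgroup x d hd := by
  rw [Subgroup.closure_le]
  rintro _ ⟨j, rfl⟩
  change of R G (x j) - 1 = ∑ i, d i (of R G (x j)) * (of R G (x i) - 1)
  simp only [hgen, ite_mul, one_mul, zero_mul, Finset.sum_ite_eq, Finset.mem_univ, if_true]

theorem sub_augmentation_smul_one_eq_sum_foxDeriv (hx : Subgroup.closure (Set.range x) = ⊤)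
    (α : R[G] →ₗ[R] R) (hα : ∀ g : G, α (of R G g) = 1) (f : R[G]) :
    f - α f • 1 = ∑ i, d i f * (of R G (x i) - 1) := by
  induction f using MonoidAlgebra.induction_linear with
  | zero => simp
  | add p q hp hq =>
    simp only [map_add, add_smul, add_mul, Finset.sum_add_distrib, ← hp, ← hq]
    abel
  | single g r =>
    have hg : g ∈ foxFormulaSubgroup x d hd :=
      closure_range_le_foxFormulaSubgroup x d hd hgen (hx ▸ Subgroup.mem_top g)
    rw [← smul_of, map_smul, hα, smul_eq_mul, mul_one, ← smul_sub, hg, Finset.smul_sum]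
    simp only [map_smul, smul_mul_assoc]

end FoxCalculus

/-- The fundamental formula of Fox calculus: if `d i` is the Fox derivative `∂/∂xᵢ`
on `ℤ[F]` for the free group `F` on `x₁, …, x_k` (the ℤ-linear map determined by
`∂xⱼ/∂xᵢ = δᵢⱼ` and `∂(uv)/∂xᵢ = ∂u/∂xᵢ + u·∂v/∂xᵢ`), and `α` is the augmentation,
then `f - α(f)·1 = Σᵢ (∂f/∂xᵢ)·(xᵢ - 1)` for every `f ∈ ℤ[F]`. -/
theorem fox_fundamental_formula (k : ℕ)
    (d : Fin k →
      MonoidAlgebra ℤ (FreeGroup (Fin k)) →ₗ[ℤ] MonoidAlgebra ℤ (FreeGroup (Fin k)))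
    (hgen : ∀ i j : Fin k,
      d i (of ℤ (FreeGroup (Fin k)) (FreeGroup.of j)) = if j = i then 1 else 0)
    (hprod : ∀ (i : Fin k) (u v : FreeGroup (Fin k)),
      d i (of ℤ (FreeGroup (Fin k)) (u * v)) =
        d i (of ℤ (FreeGroup (Fin k)) u) +
          of ℤ (FreeGroup (Fin k)) u * d i (of ℤ (FreeGroup (Fin k)) v))
    (α : MonoidAlgebra ℤ (FreeGroup (Fin k)) →ₗ[ℤ] ℤ)
    (hα : ∀ g : FreeGroup (Fin k), α (of ℤ (FreeGroup (Fin k)) g) = 1)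
    (f : MonoidAlgebra ℤ (FreeGroup (Fin k))) :
    f - α f • (1 : MonoidAlgebra ℤ (FreeGroup (Fin k))) =
      ∑ i : Fin k, d i f * (of ℤ (FreeGroup (Fin k)) (FreeGroup.of i) - 1) :=
  sub_augmentation_smul_one_eq_sum_foxDeriv FreeGroup.of d hprod hgen
    (FreeGroup.closure_range_of _) α hα f
end

section
/- If G is a locally indicable group, then the only elements of ℤ[G] that have a left inverse in ℤ[G] are the monomials ±g, g ∈ G. -/
/-!
Locally indicable groups have unique products. Given finite nonempty `A` and `B`, translate
them so that both contain `1`, let `H` be the subgroup they generate and `φ : H ↠ ℤ`. Since `ℤ`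
has unique products, some `m ∈ φ(A)`, `n ∈ φ(B)` have `m + n` represented only once in
`φ(A) + φ(B)`, and then a unique product of the fibres `A ∩ φ⁻¹(m)`, `B ∩ φ⁻¹(n)` is one of
`A · B`. These fibres are smaller than `A` and `B`, for otherwise `φ` would vanish on the
generators of `H`.

In a group with unique products, a product `s * f` of elements of `R[G]` whose supports are not
both singletons has at least two uniquely represented group elements in its support. So
`s * f = 1` forces `f = c g`, and comparing coefficients of `1` shows that `c` is a unit.
-/

open Finset

def LocallyIndicable (G : Type*) [Group G] : Prop :=
  ∀ H : Subgroup G, H ≠ ⊥ → H.FG → ∃ f : H →* Multiplicative ℤ, Function.Surjective f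

def HasUniqueMul {G : Type*} [Mul G] (A B : Finset G) : Prop :=
  ∃ a ∈ A, ∃ b ∈ B, UniqueMul A B a b

namespace HasUniqueMul

variable {G : Type*}

theorem map_iff {H : Type*} [Mul G] [Mul H] {A B : Finset G} (f : G ↪ H)
    (hf : ∀ x y, f (x * y) = f x * f y) :
    HasUniqueMul (A.map f) (B.map f) ↔ HasUniqueMul A B := by
  constructor
  · rintro ⟨_, hfa, _, hfb, hu⟩
    obtain ⟨a, ha, rfl⟩ := mem_map.mp hfa
    obtain ⟨b, hb, rfl⟩ := mem_map.mp hfb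
    exact ⟨a, ha, b, hb, (UniqueMul.mulHom_map_iff f hf).mp hu⟩
  · rintro ⟨a, ha, b, hb, hu⟩
    exact ⟨f a, mem_map_of_mem f ha, f b, mem_map_of_mem f hb,
      (UniqueMul.mulHom_map_iff f hf).mpr hu⟩

theorem of_translate [Semigroup G] [IsCancelMul G] {A B : Finset G} (g k : G)
    (h : HasUniqueMul (A.map ⟨(g * ·), mul_right_injective g⟩)
      (B.map ⟨(· * k), mul_left_injective k⟩)) :
    HasUniqueMul A B := by
  obtain ⟨_, hga, _, hbk, hu⟩ := h
  obtain ⟨a, ha, rfl⟩ := mem_map.mp hga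
  obtain ⟨b, hb, rfl⟩ := mem_map.mp hbk
  refine ⟨a, ha, b, hb, fun x y hx hy hxy => ?_⟩
  have := hu (mem_map_of_mem _ hx) (mem_map_of_mem _ hy) <| by
    change g * x * (y * k) = g * a * (b * k)
    rw [mul_assoc, ← mul_assoc x, hxy, mul_assoc a, ← mul_assoc g]
  exact ⟨mul_left_cancel this.1, mul_right_cancel this.2⟩

theorem of_fibers [Mul G] {M F : Type*} [Mul M] [UniqueProds M] [DecidableEq M] [FunLike F G M]
    [MulHomClass F G M] (φ : F)
    {A B : Finset G} (hA : A.Nonempty) (hB : B.Nonempty) :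
    ∃ m n, {a ∈ A | φ a = m}.Nonempty ∧ {b ∈ B | φ b = n}.Nonempty ∧
      (HasUniqueMul {a ∈ A | φ a = m} {b ∈ B | φ b = n} → HasUniqueMul A B) := by
  obtain ⟨m, hm, n, hn, hu⟩ := UniqueProds.uniqueMul_of_nonempty (hA.image φ) (hB.image φ)
  obtain ⟨a, ha, rfl⟩ := mem_image.mp hm
  obtain ⟨b, hb, rfl⟩ := mem_image.mp hn
  refine ⟨φ a, φ b, ⟨a, by simp [ha]⟩, ⟨b, by simp [hb]⟩, ?_⟩
  rintro ⟨a', ha', b', hb', hu'⟩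
  exact ⟨a', (mem_filter.mp ha').1, b', (mem_filter.mp hb').1,
    UniqueMul.of_image_filter (φ : G →ₙ* M) (mem_filter.mp ha').2 (mem_filter.mp hb').2 hu hu'⟩

theorem exists_smaller_of_ne_one {M : Type*} [Group G] [Monoid M] [UniqueProds M]
    [DecidableEq G] [DecidableEq M] {φ : G →* M} (hφ : φ ≠ 1) {A B : Finset G} (hA : 1 ∈ A)
    (hB : 1 ∈ B) (hAB : Subgroup.closure (↑(A ∪ B) : Set G) = ⊤) :
    ∃ A' B' : Finset G, A'.Nonempty ∧ B'.Nonempty ∧ #A' + #B' < #A + #B ∧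
      (HasUniqueMul A' B' → HasUniqueMul A B) := by
  obtain ⟨m, n, hm, hn, hu⟩ := of_fibers φ ⟨1, hA⟩ ⟨1, hB⟩
  refine ⟨_, _, hm, hn, ?_, hu⟩
  by_contra! hcard
  have hcardA := card_le_card (filter_subset (φ · = m) A)
  have hcardB := card_le_card (filter_subset (φ · = n) B)
  have hA' : {a ∈ A | φ a = m} = A :=
    eq_of_subset_of_card_le (filter_subset _ _) (by omega)
  have hB' : {b ∈ B | φ b = n} = B :=
    eq_of_subset_of_card_le (filter_subset _ _) (by omega)
  have hφA : ∀ a ∈ A, φ a = m := filter_eq_self.mp hA'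
  have hφB : ∀ b ∈ B, φ b = n := filter_eq_self.mp hB'
  obtain rfl : m = 1 := (hφA 1 hA).symm.trans (map_one φ)
  obtain rfl : n = 1 := (hφB 1 hB).symm.trans (map_one φ)
  refine hφ (MonoidHom.eq_of_eqOn_dense hAB fun x hx => ?_)
  rcases mem_union.mp hx with hx | hx
  exacts [hφA x hx, hφB x hx]

end HasUniqueMul

theorem LocallyIndicable.hasUniqueMul_of_one_mem {G : Type*} [Group G] (hG : LocallyIndicable G)
    {A B : Finset G} (hA : 1 ∈ A) (hB : 1 ∈ B)
    (ih : ∀ A' B' : Finset G, A'.Nonempty → B'.Nonempty → #A' + #B' < #A + #B →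
      HasUniqueMul A' B') :
    HasUniqueMul A B := by
  classical
  set H := Subgroup.closure (↑(A ∪ B) : Set G)
  have hAH : ∀ a ∈ A, a ∈ H := fun a ha => Subgroup.subset_closure (mem_union_left _ ha)
  have hBH : ∀ b ∈ B, b ∈ H := fun b hb => Subgroup.subset_closure (mem_union_right _ hb)
  by_cases hbot : H = ⊥
  · simp only [hbot, Subgroup.mem_bot] at hAH hBH
    exact ⟨1, hA, 1, hB, fun x y hx hy _ => ⟨hAH x hx, hBH y hy⟩⟩
  obtain ⟨φ, hφ⟩ := hG H hbot ⟨A ∪ B, rfl⟩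
  have hφ1 : φ ≠ 1 := by
    rintro rfl
    obtain ⟨_, h⟩ := hφ (Multiplicative.ofAdd 1)
    exact one_ne_zero (Multiplicative.ofAdd.injective h.symm)
  have hclosure : Subgroup.closure (↑(A.subtype (· ∈ H) ∪ B.subtype (· ∈ H)) : Set H) = ⊤ := by
    convert Subgroup.closure_closure_coe_preimage (k := (↑(A ∪ B) : Set G)) using 2
    ext; simp
  obtain ⟨A', B', hA'ne, hB'ne, hcard, hu⟩ := HasUniqueMul.exists_smaller_of_ne_one hφ1
    (mem_subtype.mpr hA) (mem_subtype.mpr hB) hclosure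
  have huH := ih (A'.map (Function.Embedding.subtype _)) (B'.map (Function.Embedding.subtype _))
    hA'ne.map hB'ne.map (by
      simp only [card_map]
      have := (card_subtype (· ∈ H) A).trans_le (card_filter_le _ _)
      have := (card_subtype (· ∈ H) B).trans_le (card_filter_le _ _)
      omega)
  rw [← subtype_map_of_mem hAH, ← subtype_map_of_mem hBH]
  exact (HasUniqueMul.map_iff _ fun _ _ => rfl).mpr
    (hu ((HasUniqueMul.map_iff _ fun _ _ => rfl).mp huH))

theorem LocallyIndicable.uniqueProds {G : Type*} [Group G] (hG : LocallyIndicable G) :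
    UniqueProds G := by
  refine ⟨fun {A B} hA hB => ?_⟩
  induction h : #A + #B using Nat.strong_induction_on generalizing A B with
  | _ n ih =>
  obtain ⟨a, ha⟩ := hA
  obtain ⟨b, hb⟩ := hB
  refine HasUniqueMul.of_translate a⁻¹ b⁻¹ <| hG.hasUniqueMul_of_one_mem
    (mem_map.mpr ⟨a, ha, inv_mul_cancel a⟩) (mem_map.mpr ⟨b, hb, mul_inv_cancel b⟩)
    fun A' B' hA' hB' hcard => ih _ ?_ hA' hB' rfl
  simpa only [card_map, h] using hcard

namespace MonoidAlgebra

theorem card_support_mul_card_support_le_one {R G : Type*} [Semiring R] [NoZeroDivisors R] [Mul G]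
    [TwoUniqueProds G] {f g : MonoidAlgebra R G} (h : #(f * g).coeff.support ≤ 1) :
    #f.coeff.support * #g.coeff.support ≤ 1 := by
  by_contra! hcard
  obtain ⟨p, hp, q, hq, hpq, hup, huq⟩ := TwoUniqueProds.uniqueMul_of_one_lt_card hcard
  rw [mem_product, Finsupp.mem_support_iff, Finsupp.mem_support_iff] at hp hq
  have hmem : ∀ {x y : G}, UniqueMul f.coeff.support g.coeff.support x y → f.coeff x ≠ 0 →
      g.coeff y ≠ 0 → x * y ∈ (f * g).coeff.support := fun hu hx hy => by
    rw [Finsupp.mem_support_iff, coeff_mul_mul_of_uniqueMul hu]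
    exact mul_ne_zero hx hy
  have heq := card_le_one.mp h _ (hmem huq hq.1 hq.2) _ (hmem hup hp.1 hp.2)
  obtain ⟨h1, h2⟩ := hup (Finsupp.mem_support_iff.mpr hq.1) (Finsupp.mem_support_iff.mpr hq.2) heq
  exact hpq (Prod.ext h1 h2).symm

theorem exists_eq_single_of_mul_eq_one {R G : Type*} [Ring R] [IsDomain R] [Group G]
    [UniqueProds G] {f s : MonoidAlgebra R G} (h : s * f = 1) :
    ∃ g c, IsUnit c ∧ f = single g c := by
  have : TwoUniqueProds G := UniqueProds.toTwoUniqueProds_of_group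
  have hf : f ≠ 0 := by rintro rfl; simp at h
  have hs : s ≠ 0 := by rintro rfl; simp at h
  have hcard := card_support_mul_card_support_le_one (f := s) (g := f) <| by
    rw [h, one_def]; exact Finsupp.card_support_le_one'.mpr ⟨1, 1, rfl⟩
  have hs_pos : 0 < #s.coeff.support := card_pos.mpr (Finsupp.support_nonempty_iff.mpr <| by
    rwa [Ne, coeff_eq_zero])
  have hf_pos : 0 < #f.coeff.support := card_pos.mpr (Finsupp.support_nonempty_iff.mpr <| by
    rwa [Ne, coeff_eq_zero])
  obtain ⟨g, c, -, hfc⟩ := (Finsupp.card_support_eq_one' (f := f.coeff)).mp <| by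
    have := Nat.le_mul_of_pos_left #f.coeff.support hs_pos
    omega
  obtain rfl : f = single g c := coeff_injective hfc
  refine ⟨g, c, IsUnit.of_mul_eq_one_right (s.coeff g⁻¹) ?_, rfl⟩
  simpa [coeff_mul_single_apply] using congr(($h).coeff 1)

end MonoidAlgebra

/-- Higman's theorem: if `G` is locally indicable (every nontrivial finitely generated
subgroup admits an epimorphism onto `ℤ`), then the only elements of `ℤ[G]` having a
left inverse are the monomials `±g` with `g ∈ G`. -/
theorem left_invertible_is_monomial_of_locallyIndicable {G : Type*} [Group G]
    (hG : ∀ H : Subgroup G, H ≠ ⊥ → H.FG →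
      ∃ f : H →* Multiplicative ℤ, Function.Surjective f)
    (f s : MonoidAlgebra ℤ G) (h : s * f = 1) :
    ∃ g : G, f = MonoidAlgebra.single g 1 ∨ f = MonoidAlgebra.single g (-1) := by
  have : UniqueProds G := LocallyIndicable.uniqueProds hG
  obtain ⟨g, c, hc, rfl⟩ := MonoidAlgebra.exists_eq_single_of_mul_eq_one h
  rcases Int.isUnit_iff.mp hc with rfl | rfl
  exacts [⟨g, .inl rfl⟩, ⟨g, .inr rfl⟩]
end

section
/- Let G be the Baumslag–Solitar group B = ⟨a, t | t⁻¹a²ta⁻¹⟩ and let φ : B → ℝ be the homomorphism with φ(t) = 1 and φ(a) = 0. Then the Fox derivative r_a = t⁻¹(1 + a) − 1 of the relator r = t⁻¹a²ta⁻¹ with respect to a is invertible in the Novikov–Sikorav completion Ẑ[B]_φ but is not invertible in Ẑ[B]_{−φ}. -/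
/-- The Novikov–Sikorav condition: a formal sum `f : G → ℤ` lies in the completion
`Ẑ[G]_ψ` iff for every `C ∈ ℝ` there are only finitely many `g` with `ψ(g) > C`
and `f g ≠ 0`. -/
def NovikovCond {G : Type*} [Group G] (ψ : G → ℝ) (f : G → ℤ) : Prop :=
  ∀ C : ℝ, {g : G | C < ψ g ∧ f g ≠ 0}.Finite

/-- Convolution product of formal sums on a group (the multiplication of the
Novikov–Sikorav completion). -/
noncomputable def novConv {G : Type*} [Group G] (f h : G → ℤ) : G → ℤ :=
  fun g => ∑ᶠ a : G, f a * h (a⁻¹ * g)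

/-- The relator `r = t⁻¹ a² t a⁻¹` of the Baumslag–Solitar group `B = B(2,1)`,
with `t = FreeGroup.of false` and `a = FreeGroup.of true`. -/
def bsRel : FreeGroup Bool :=
  (FreeGroup.of false)⁻¹ * FreeGroup.of true * FreeGroup.of true *
    FreeGroup.of false * (FreeGroup.of true)⁻¹

/-- The Baumslag–Solitar group `B = ⟨a, t | t⁻¹a²ta⁻¹⟩`. -/
abbrev BSGroup := PresentedGroup ({bsRel} : Set (FreeGroup Bool))

/-- `a ∈ B`. -/
def bsA : BSGroup := PresentedGroup.of true

/-- `t ∈ B`. -/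
def bsT : BSGroup := PresentedGroup.of false

/-- The Fox derivative `r_a = t⁻¹ + t⁻¹a - 1 = t⁻¹(1 + a) - 1 ∈ ℤ[B]` of the relator. -/
noncomputable def bsRa : MonoidAlgebra ℤ BSGroup :=
  MonoidAlgebra.of ℤ BSGroup bsT⁻¹ * (1 + MonoidAlgebra.of ℤ BSGroup bsA) - 1

/-!
If `x ∈ ℤ[G]` is supported where `φ ≤ -ε < 0`, then `xⁿ` is supported where `φ ≤ -nε`, so the
geometric series `Σ xⁿ` lies in `Ẑ[G]_φ`; comparing it with the partial sums, for which
`(Σ_{n<N} xⁿ)(x - 1) = x^N - 1`, shows that `-Σ xⁿ` inverts `x - 1`. With `x = t⁻¹(1 + a)`,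
this inverts `r_a = x - 1` in `Ẑ[B]_φ`.

In `Ẑ[B]_{-φ}`, the support of a right inverse `h` of `r_a` has a point `u` of minimal `φ`.
Evaluating `r_a h = 1` on the level `φ = φ u` kills the `t⁻¹`-term, leaving
`h (aᵏ u) + h (aᵏ⁻¹ u) = [aᵏ u = t]`, which vanishes for all but at most one `k` since `a` has
infinite order (it acts by `x ↦ x + 1` in the affine action `t ↦ (x ↦ 2x)` of `B` on `ℝ`).
Then `h (aᵏ u) = ± h u ≠ 0` along a half-line of `k`, infinitely many points of one level.
-/

open MonoidAlgebra

section NovikovCompletion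

variable {G : Type*} [Group G]

def IsNovikovUnit [DecidableEq G] (ψ : G → ℝ) (f : G → ℤ) : Prop :=
  ∃ h : G → ℤ, NovikovCond ψ h ∧
    (novConv h f = fun g => if g = 1 then 1 else 0) ∧
    (novConv f h = fun g => if g = 1 then 1 else 0)

lemma novConv_coeff_left (p : MonoidAlgebra ℤ G) (h : G → ℤ) (g : G) :
    novConv (⇑p.coeff) h g = p.coeff.sum fun y r => r * h (y⁻¹ * g) := by
  refine finsum_eq_sum_of_support_subset _ fun y hy => ?_
  simpa using left_ne_zero_of_mul hy

lemma novConv_coeff_right (h : G → ℤ) (p : MonoidAlgebra ℤ G) (g : G) :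
    novConv h (⇑p.coeff) g = p.coeff.sum fun y r => h (g * y⁻¹) * r := by
  rw [novConv, ← finsum_comp_equiv ((Equiv.inv G).trans (Equiv.mulLeft g))
    (f := fun a => h a * p.coeff (a⁻¹ * g))]
  refine (finsum_eq_sum_of_support_subset (s := p.coeff.support) _ fun y hy => ?_).trans ?_
  · simpa using right_ne_zero_of_mul hy
  · simp [Finsupp.sum]

lemma NovikovCond.exists_forall_le {ψ : G → ℝ} {f : G → ℤ} (hf : NovikovCond ψ f) {g₀ : G}
    (hg₀ : f g₀ ≠ 0) : ∃ u, f u ≠ 0 ∧ ∀ v, f v ≠ 0 → ψ v ≤ ψ u := by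
  obtain ⟨u, ⟨-, hu⟩, hmax⟩ :=
    Set.exists_max_image _ ψ (hf (ψ g₀ - 1)) ⟨g₀, sub_one_lt _, hg₀⟩
  refine ⟨u, hu, fun v hv => ?_⟩
  by_cases hv' : ψ g₀ - 1 < ψ v
  · exact hmax v ⟨hv', hv⟩
  · linarith [hmax g₀ ⟨sub_one_lt _, hg₀⟩]

end NovikovCompletion

section AdditiveFunction

variable {G : Type*} [Group G] {φ : G → ℝ} (hφ : ∀ g₁ g₂, φ (g₁ * g₂) = φ g₁ + φ g₂)
include hφ

lemma apply_one_of_map_mul : φ 1 = 0 := by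
  simpa using hφ 1 1

lemma apply_inv_of_map_mul (g : G) : φ g⁻¹ = -φ g := by
  linarith [hφ g⁻¹ g, inv_mul_cancel g ▸ apply_one_of_map_mul hφ]

lemma apply_zpow_of_map_mul (g : G) (k : ℤ) : φ (g ^ k) = k * φ g :=
  (map_zsmul (AddMonoidHom.mk' (fun g : Additive G => φ g.toMul) hφ) k (Additive.ofMul g)).trans
    (zsmul_eq_mul _ _)

end AdditiveFunction

section GeometricSeries

variable {G : Type*} [Group G] {φ : G → ℝ} {ε : ℝ} {x : MonoidAlgebra ℤ G}

/-- The `finsum` is junk (`0`) at `g` if infinitely many `xⁿ` meet `g`; `novGeom_eq_coeff_geom_sum`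
rules this out when `x` is supported where `φ ≤ -ε < 0`. -/
noncomputable def novGeom (x : MonoidAlgebra ℤ G) (g : G) : ℤ :=
  ∑ᶠ n : ℕ, (x ^ n).coeff g

variable (hφ : ∀ g₁ g₂, φ (g₁ * g₂) = φ g₁ + φ g₂) (hx : ∀ y ∈ x.coeff.support, φ y ≤ -ε)
include hφ hx

lemma le_of_mem_support_coeff_pow (n : ℕ) : ∀ g ∈ (x ^ n).coeff.support, φ g ≤ -(n * ε) := by
  classical
  induction n with
  | zero =>
    intro g hg
    rw [pow_zero, one_def, coeff_single, Finsupp.support_single _ one_ne_zero,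
      Finset.mem_singleton] at hg
    simp [hg, apply_one_of_map_mul hφ]
  | succ n ih =>
    intro g hg
    rw [pow_succ] at hg
    obtain ⟨b, hb, c, hc, rfl⟩ := Finset.mem_mul.mp (support_coeff_mul_subset _ _ hg)
    rw [hφ]
    push_cast
    linarith [ih b hb, hx c hc]

lemma coeff_pow_eq_zero_of_lt {n : ℕ} {g : G} (hg : -φ g < n * ε) : (x ^ n).coeff g = 0 := by
  by_contra hne
  linarith [le_of_mem_support_coeff_pow hφ hx n g (Finsupp.mem_support_iff.mpr hne)]

lemma novGeom_eq_coeff_geom_sum (hε : 0 ≤ ε) {N : ℕ} {g : G} (hN : -φ g < N * ε) :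
    novGeom x g = (∑ n ∈ Finset.range N, x ^ n).coeff g := by
  rw [novGeom, coeff_sum, Finsupp.finsetSum_apply]
  refine finsum_eq_sum_of_support_subset _ fun n hn => ?_
  by_contra hnN
  have hNn : (N : ℝ) ≤ n := by simpa using hnN
  exact hn (coeff_pow_eq_zero_of_lt hφ hx (by nlinarith))

lemma novikovCond_neg_novGeom (hε : 0 < ε) : NovikovCond φ (-novGeom x) := by
  intro C
  obtain ⟨N, hN⟩ := exists_nat_gt (-C / ε)
  rw [div_lt_iff₀ hε] at hN
  refine (∑ n ∈ Finset.range N, x ^ n).coeff.support.finite_toSet.subset fun g ⟨hC, hg⟩ => ?_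
  rw [Pi.neg_apply, neg_ne_zero, novGeom_eq_coeff_geom_sum hφ hx hε.le (by linarith)] at hg
  exact Finsupp.mem_support_iff.mpr hg

lemma nonpos_of_mem_support_coeff_sub_one (hε : 0 ≤ ε) :
    ∀ y ∈ (x - 1).coeff.support, φ y ≤ 0 := by
  classical
  intro y hy
  rcases Finset.mem_union.mp (Finsupp.support_sub (coeff_sub x 1 ▸ hy)) with hy | hy
  · linarith [hx y hy]
  · rw [one_def, coeff_single, Finsupp.support_single _ one_ne_zero,
      Finset.mem_singleton] at hy
    rw [hy, apply_one_of_map_mul hφ]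

variable [DecidableEq G]

lemma coeff_one_sub_pow_of_lt {N : ℕ} {g : G} (hN : -φ g < N * ε) :
    (1 - x ^ N).coeff g = if g = 1 then 1 else 0 := by
  rw [coeff_sub, Finsupp.sub_apply, coeff_pow_eq_zero_of_lt hφ hx hN, sub_zero, one_def,
    coeff_single, Finsupp.single_apply]
  exact if_congr eq_comm rfl rfl

theorem isNovikovUnit_sub_one (hε : 0 < ε) : IsNovikovUnit φ ⇑(x - 1).coeff := by
  have hle := nonpos_of_mem_support_coeff_sub_one hφ hx hε.le
  refine ⟨-novGeom x, novikovCond_neg_novGeom hφ hx hε, funext fun g => ?_, funext fun g => ?_⟩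
  all_goals
    obtain ⟨N, hN⟩ := exists_nat_gt (-φ g / ε)
    rw [div_lt_iff₀ hε] at hN
    set S := ∑ n ∈ Finset.range N, x ^ n
    have hS : ∀ g', φ g ≤ φ g' → (-novGeom x) g' = (-S).coeff g' := fun g' hg' => by
      rw [Pi.neg_apply, coeff_neg, Finsupp.neg_apply,
        novGeom_eq_coeff_geom_sum hφ hx hε.le (by linarith)]
  · calc novConv (-novGeom x) ⇑(x - 1).coeff g
        = (x - 1).coeff.sum fun y r => (-S).coeff (g * y⁻¹) * r := by
          rw [novConv_coeff_right]
          refine Finset.sum_congr rfl fun y hy => congrArg (· * _) (hS _ ?_)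
          linarith [hφ g y⁻¹, apply_inv_of_map_mul hφ y, hle y hy]
      _ = (1 - x ^ N).coeff g := by rw [← coeff_mul_apply_right, neg_mul, geom_sum_mul, neg_sub]
      _ = if g = 1 then 1 else 0 := coeff_one_sub_pow_of_lt hφ hx hN
  · calc novConv ⇑(x - 1).coeff (-novGeom x) g
        = (x - 1).coeff.sum fun y r => r * (-S).coeff (y⁻¹ * g) := by
          rw [novConv_coeff_left]
          refine Finset.sum_congr rfl fun y hy => congrArg (_ * ·) (hS _ ?_)
          linarith [hφ y⁻¹ g, apply_inv_of_map_mul hφ y, hle y hy]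
      _ = (1 - x ^ N).coeff g := by rw [← coeff_mul_apply_left, mul_neg, mul_geom_sum, neg_sub]
      _ = if g = 1 then 1 else 0 := coeff_one_sub_pow_of_lt hφ hx hN

end GeometricSeries

lemma infinite_setOf_ne_zero_of_add_sub_one_eq_zero {c : ℤ → ℤ} (h0 : c 0 ≠ 0) (k₀ : ℤ)
    (hc : ∀ k ≠ k₀, c k + c (k - 1) = 0) : {k | c k ≠ 0}.Infinite := by
  rcases le_or_gt k₀ 0 with hk₀ | hk₀
  · have hne : ∀ n : ℕ, c n ≠ 0 := by
      intro n
      induction n with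
      | zero => simpa using h0
      | succ n ih =>
        have := hc (n + 1) (by omega)
        rw [add_sub_cancel_right] at this
        push_cast
        omega
    exact Set.infinite_of_injective_forall_mem Nat.cast_injective hne
  · have hne : ∀ n : ℕ, c (-n) ≠ 0 := by
      intro n
      induction n with
      | zero => simpa using h0
      | succ n ih =>
        have := hc (-n) (by omega)
        rw [← neg_add'] at this
        push_cast
        omega
    exact Set.infinite_of_injective_forall_mem (neg_injective.comp Nat.cast_injective) hne

section FoxDerivative

variable {G : Type*} [Group G] {φ : G → ℝ}

variable (t a : G)

lemma coeff_of_inv_mul_one_add_of :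
    (of ℤ G t⁻¹ * (1 + of ℤ G a)).coeff = Finsupp.single t⁻¹ 1 + Finsupp.single (t⁻¹ * a) 1 := by
  rw [of_apply, of_apply, mul_add, mul_one, single_mul_single, one_mul]
  rfl

lemma le_of_mem_support_of_inv_mul_one_add_of (hφ : ∀ g₁ g₂, φ (g₁ * g₂) = φ g₁ + φ g₂)
    (ha : φ a = 0) : ∀ y ∈ (of ℤ G t⁻¹ * (1 + of ℤ G a)).coeff.support, φ y ≤ -φ t := by
  classical
  intro y hy
  rw [coeff_of_inv_mul_one_add_of] at hy
  rcases Finset.mem_union.mp (Finsupp.support_add hy) with hy | hy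
  all_goals
    rw [Finsupp.support_single _ one_ne_zero, Finset.mem_singleton] at hy
    simp [hy, hφ, apply_inv_of_map_mul hφ, ha]

lemma novConv_of_inv_mul_one_add_of_sub_one (h : G → ℤ) (g : G) :
    novConv ⇑(of ℤ G t⁻¹ * (1 + of ℤ G a) - 1).coeff h g =
      h (t * g) + h (a⁻¹ * (t * g)) - h g := by
  rw [novConv_coeff_left, coeff_sub, coeff_of_inv_mul_one_add_of, one_def, coeff_single,
    Finsupp.sum_sub_index (fun _ _ _ => sub_mul _ _ _),
    Finsupp.sum_add_index' (fun _ => zero_mul _) (fun _ _ _ => add_mul _ _ _)]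
  simp [Finsupp.sum_single_index, mul_assoc]

lemma apply_add_apply_inv_mul_eq_ite [DecidableEq G] (hφ : ∀ g₁ g₂, φ (g₁ * g₂) = φ g₁ + φ g₂)
    (ht : 0 < φ t) {h : G → ℤ}
    (hinv : novConv ⇑(of ℤ G t⁻¹ * (1 + of ℤ G a) - 1).coeff h = fun g => if g = 1 then 1 else 0)
    {u : G} (hmin : ∀ v, h v ≠ 0 → φ u ≤ φ v) {v : G} (hv : φ v = φ u) :
    h v + h (a⁻¹ * v) = if v = t then 1 else 0 := by
  have hlow : h (t⁻¹ * v) = 0 := by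
    by_contra hne
    linarith [hmin _ hne, hφ t⁻¹ v, apply_inv_of_map_mul hφ t]
  have := congrFun hinv (t⁻¹ * v)
  rw [novConv_of_inv_mul_one_add_of_sub_one, mul_inv_cancel_left, hlow, sub_zero] at this
  rw [this]
  exact if_congr (inv_mul_eq_one.trans eq_comm) rfl rfl

theorem not_exists_novikov_rightInverse [DecidableEq G] (hφ : ∀ g₁ g₂, φ (g₁ * g₂) = φ g₁ + φ g₂)
    (ht : 0 < φ t) (ha : φ a = 0) (ha' : Function.Injective fun k : ℤ => a ^ k) :
    ¬ ∃ h : G → ℤ, NovikovCond (fun g => -φ g) h ∧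
      novConv ⇑(of ℤ G t⁻¹ * (1 + of ℤ G a) - 1).coeff h = fun g => if g = 1 then 1 else 0 := by
  rintro ⟨h, hN, hinv⟩
  obtain ⟨g₀, hg₀⟩ : ∃ g, h g ≠ 0 := by
    by_contra! hzero
    have := congrFun hinv 1
    rw [novConv_of_inv_mul_one_add_of_sub_one] at this
    simp [hzero] at this
  obtain ⟨u, hu, hmax⟩ := hN.exists_forall_le hg₀
  have hφ_zpow : ∀ k : ℤ, φ (a ^ k * u) = φ u := fun k => by
    rw [hφ, apply_zpow_of_map_mul hφ, ha, mul_zero, zero_add]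
  have hrec : ∀ k : ℤ, h (a ^ k * u) + h (a ^ (k - 1) * u) = if a ^ k * u = t then 1 else 0 := by
    intro k
    have hprev : a⁻¹ * (a ^ k * u) = a ^ (k - 1) * u := by group
    rw [← hprev]
    exact apply_add_apply_inv_mul_eq_ite t a hφ ht hinv (fun v hv => neg_le_neg_iff.mp (hmax v hv))
      (hφ_zpow k)
  obtain ⟨k₀, hk₀⟩ : ∃ k₀ : ℤ, ∀ k ≠ k₀, a ^ k * u ≠ t := by
    by_cases hex : ∃ k₀ : ℤ, a ^ k₀ * u = t
    · obtain ⟨k₀, hk₀⟩ := hex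
      exact ⟨k₀, fun k hk he => hk (ha' (mul_right_cancel (he.trans hk₀.symm)))⟩
    · push Not at hex
      exact ⟨0, fun k _ => hex k⟩
  have hinf := infinite_setOf_ne_zero_of_add_sub_one_eq_zero (c := fun k => h (a ^ k * u))
    (by simpa using hu) k₀ fun k hk => by rw [hrec, if_neg (hk₀ k hk)]
  have hinj : Set.InjOn (fun k : ℤ => a ^ k * u) {k | h (a ^ k * u) ≠ 0} :=
    fun k _ l _ e => ha' (mul_right_cancel e)
  refine ((hinf.image hinj).mono ?_) (hN (-φ u - 1))
  rintro _ ⟨k, hk, rfl⟩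
  exact ⟨by linarith [hφ_zpow k], hk⟩

end FoxDerivative

noncomputable def bsAffinePerm : Bool → Equiv.Perm ℝ := fun b =>
  if b then Equiv.addRight 1 else Equiv.mulLeft₀ 2 two_ne_zero

lemma bsAffinePerm_rel :
    ∀ r ∈ ({bsRel} : Set (FreeGroup Bool)), FreeGroup.lift bsAffinePerm r = 1 := by
  rintro r rfl
  ext x
  simp [bsRel, bsAffinePerm, Equiv.Perm.mul_apply, Equiv.Perm.inv_def, Equiv.mulLeft₀]
  ring

noncomputable def bsAffineRep : BSGroup →* Equiv.Perm ℝ :=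
  PresentedGroup.toGroup bsAffinePerm_rel

lemma injective_zpow_bsA : Function.Injective fun k : ℤ => bsA ^ k := by
  intro k l hkl
  simpa [bsAffineRep, bsAffinePerm, bsA, PresentedGroup.toGroup.of, Equiv.zsmul_addRight]
    using congrArg (fun g => bsAffineRep g 0) hkl

/-- For the Baumslag–Solitar group `B = ⟨a, t | t⁻¹a²ta⁻¹⟩` and the homomorphism
`φ : B → ℝ` with `φ(t) = 1`, `φ(a) = 0`, the Fox derivative `r_a = t⁻¹(1 + a) - 1`
is invertible in the Novikov–Sikorav completion `Ẑ[B]_φ`, but not invertible in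
`Ẑ[B]_{-φ}`. -/
theorem bs_fox_deriv_invertible [DecidableEq BSGroup]
    (φ : BSGroup → ℝ) (hφ : ∀ x y : BSGroup, φ (x * y) = φ x + φ y)
    (hφt : φ bsT = 1) (hφa : φ bsA = 0) :
    (∃ h : BSGroup → ℤ, NovikovCond φ h ∧
      (novConv h (⇑bsRa.coeff) = fun g => if g = 1 then 1 else 0) ∧
      (novConv (⇑bsRa.coeff) h = fun g => if g = 1 then 1 else 0)) ∧
    ¬ (∃ h : BSGroup → ℤ, NovikovCond (fun g => -φ g) h ∧
      (novConv h (⇑bsRa.coeff) = fun g => if g = 1 then 1 else 0) ∧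
      (novConv (⇑bsRa.coeff) h = fun g => if g = 1 then 1 else 0)) := by
  have ht : 0 < φ bsT := hφt ▸ one_pos
  refine ⟨isNovikovUnit_sub_one hφ (le_of_mem_support_of_inv_mul_one_add_of bsT bsA hφ hφa) ht, ?_⟩
  rintro ⟨h, hN, -, hright⟩
  exact not_exists_novikov_rightInverse bsT bsA hφ ht hφa injective_zpow_bsA ⟨h, hN, hright⟩
end
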